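/- Assume b = e = 0 (with a, d ∈ ℝ arbitrary). Let u be a solution of the Longstaff–Schwartz equation on Ω, and let ε ∈ ℝ. Then the function w(x,y,t) = (1 + tε)^{-2(a+d)} · exp( 2ε(x+y)/(1 + tε) ) · u( x/(1 + tε)², y/(1 + tε)², t/(1 + tε) ) satisfies the Longstaff–Schwartz equation at every point (x,y,t) ∈ Ω with 1 + tε > 0. -/

import Mathlib

/-- Partial derivative in `x`. -/
noncomputable def pdX (u : ℝ → ℝ → ℝ → ℝ) (x y t : ℝ) : ℝ := deriv (fun z => u z y t) x

/-- Partial derivative in `y`. -/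
noncomputable def pdY (u : ℝ → ℝ → ℝ → ℝ) (x y t : ℝ) : ℝ := deriv (fun z => u x z t) y

/-- Partial derivative in `t`. -/
noncomputable def pdT (u : ℝ → ℝ → ℝ → ℝ) (x y t : ℝ) : ℝ := deriv (fun z => u x y z) t

/-- Second partial derivative in `x`. -/
noncomputable def pdXX (u : ℝ → ℝ → ℝ → ℝ) (x y t : ℝ) : ℝ := deriv (fun z => pdX u z y t) x

/-- Second partial derivative in `y`. -/
noncomputable def pdYY (u : ℝ → ℝ → ℝ → ℝ) (x y t : ℝ) : ℝ := deriv (fun z => pdY u x z t) y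

/-- The domain `Ω = {(x,y,t) : x > 0, y > 0}`. -/
def Omega : Set (ℝ × ℝ × ℝ) := {p | 0 < p.1 ∧ 0 < p.2.1}

/-- The Longstaff–Schwartz (Kolmogorov backward) equation
`u_t = −((a−bx)·u_x + (d−ey)·u_y + (x/2)·u_xx + (y/2)·u_yy)` holds at the point `(x,y,t)`. -/
def LSEq (a b d e : ℝ) (u : ℝ → ℝ → ℝ → ℝ) (x y t : ℝ) : Prop :=
  pdT u x y t =
    -((a - b * x) * pdX u x y t + (d - e * y) * pdY u x y t +
      x / 2 * pdXX u x y t + y / 2 * pdYY u x y t)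

/-- `u` is a solution of the Longstaff–Schwartz equation on `Ω`: it is C² on `Ω` and
satisfies the equation at every point of `Ω`. -/
def IsLSSolution (a b d e : ℝ) (u : ℝ → ℝ → ℝ → ℝ) : Prop :=
  ContDiffOn ℝ 2 (fun p : ℝ × ℝ × ℝ => u p.1 p.2.1 p.2.2) Omega ∧
  ∀ x y t : ℝ, 0 < x → 0 < y → LSEq a b d e u x y t

/-!
Write `s = 1 + tε` and `w = lsTransform p ε u`. Every partial derivative of `w` at `(x, y, t)` is
again of the form `s ^ p * exp (2ε(x + y)/s) * (…)`, where `(…)` combines `u` and its partial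
derivatives at the transformed point `(x/s², y/s², t/s)` (the `y`-derivatives follow from the
`x`-derivatives by exchanging `x` and `y`). Substituting the equation for `u` at that point turns the
equation for `w` into an algebraic identity, which holds for the exponent `p = -2(a + d)`.
-/

open Function Real

lemma isOpen_Omega : IsOpen Omega :=
  (isOpen_Ioi.preimage continuous_fst).inter
    (isOpen_Ioi.preimage (continuous_fst.comp continuous_snd))

lemma ContDiffOn.differentiableAt_of_mem_Omega {f : ℝ × ℝ × ℝ → ℝ} {n : WithTop ℕ∞}
    (hf : ContDiffOn ℝ n f Omega) (hn : n ≠ 0) {x y t : ℝ} (hx : 0 < x) (hy : 0 < y) :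
    DifferentiableAt ℝ f (x, y, t) :=
  (hf.contDiffAt (isOpen_Omega.mem_nhds ⟨hx, hy⟩)).differentiableAt hn

section Partials

variable {u : ℝ → ℝ → ℝ → ℝ} {x y t : ℝ}

lemma hasDerivAt_comp_curve {f g k : ℝ → ℝ} {f' g' k' s : ℝ}
    (hu : DifferentiableAt ℝ ↿u (f s, g s, k s))
    (hf : HasDerivAt f f' s) (hg : HasDerivAt g g' s) (hk : HasDerivAt k k' s) :
    HasDerivAt (fun z => u (f z) (g z) (k z)) (fderiv ℝ ↿u (f s, g s, k s) (f', g', k')) s :=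
  hu.hasFDerivAt.comp_hasDerivAt (f := fun z => (f z, g z, k z)) s (hf.prodMk (hg.prodMk hk))

lemma pdX_eq_fderiv (hu : DifferentiableAt ℝ ↿u (x, y, t)) :
    pdX u x y t = fderiv ℝ ↿u (x, y, t) (1, 0, 0) :=
  (hasDerivAt_comp_curve hu (hasDerivAt_id x) (hasDerivAt_const x y) (hasDerivAt_const x t)).deriv

lemma pdY_eq_fderiv (hu : DifferentiableAt ℝ ↿u (x, y, t)) :
    pdY u x y t = fderiv ℝ ↿u (x, y, t) (0, 1, 0) :=
  (hasDerivAt_comp_curve hu (hasDerivAt_const y x) (hasDerivAt_id y) (hasDerivAt_const y t)).deriv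

lemma pdT_eq_fderiv (hu : DifferentiableAt ℝ ↿u (x, y, t)) :
    pdT u x y t = fderiv ℝ ↿u (x, y, t) (0, 0, 1) :=
  (hasDerivAt_comp_curve hu (hasDerivAt_const t x) (hasDerivAt_const t y) (hasDerivAt_id t)).deriv

lemma hasDerivAt_pdX (hu : DifferentiableAt ℝ ↿u (x, y, t)) :
    HasDerivAt (fun z => u z y t) (pdX u x y t) x := by
  rw [pdX_eq_fderiv hu]
  exact hasDerivAt_comp_curve hu (hasDerivAt_id x) (hasDerivAt_const x y) (hasDerivAt_const x t)

lemma hasDerivAt_comp_curve_of_partials {f g k : ℝ → ℝ} {f' g' k' s : ℝ}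
    (hu : DifferentiableAt ℝ ↿u (f s, g s, k s))
    (hf : HasDerivAt f f' s) (hg : HasDerivAt g g' s) (hk : HasDerivAt k k' s) :
    HasDerivAt (fun z => u (f z) (g z) (k z))
      (f' * pdX u (f s) (g s) (k s) + g' * pdY u (f s) (g s) (k s) +
        k' * pdT u (f s) (g s) (k s)) s := by
  convert hasDerivAt_comp_curve hu hf hg hk using 1
  have hv : ((f', g', k') : ℝ × ℝ × ℝ) = f' • (1, 0, 0) + g' • (0, 1, 0) + k' • (0, 0, 1) := by
    simp
  rw [hv, map_add, map_add, map_smul, map_smul, map_smul, pdX_eq_fderiv hu, pdY_eq_fderiv hu,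
    pdT_eq_fderiv hu, smul_eq_mul, smul_eq_mul, smul_eq_mul]

lemma contDiffOn_pdX {n : WithTop ℕ∞} (hu : ContDiffOn ℝ (n + 1) ↿u Omega) :
    ContDiffOn ℝ n ↿(pdX u) Omega := by
  refine ((hu.fderiv_of_isOpen isOpen_Omega le_rfl).clm_apply
    (contDiffOn_const (c := ((1, 0, 0) : ℝ × ℝ × ℝ)))).congr ?_
  rintro ⟨x, y, t⟩ ⟨hx, hy⟩
  exact pdX_eq_fderiv (hu.differentiableAt_of_mem_Omega (by simp) hx hy)

end Partials

def swapXY (u : ℝ → ℝ → ℝ → ℝ) : ℝ → ℝ → ℝ → ℝ := fun x y t => u y x t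

lemma ContDiffOn.swapXY {u : ℝ → ℝ → ℝ → ℝ} {n : WithTop ℕ∞} (hu : ContDiffOn ℝ n ↿u Omega) :
    ContDiffOn ℝ n ↿(swapXY u) Omega :=
  hu.comp (f := fun p : ℝ × ℝ × ℝ => (p.2.1, p.1, p.2.2)) (by fun_prop) fun _ hp => ⟨hp.2, hp.1⟩

noncomputable def lsTransform (p ε : ℝ) (v : ℝ → ℝ → ℝ → ℝ) (x y t : ℝ) : ℝ :=
  (1 + t * ε) ^ p * exp (2 * ε * (x + y) / (1 + t * ε)) *
    v (x / (1 + t * ε) ^ 2) (y / (1 + t * ε) ^ 2) (t / (1 + t * ε))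

section Transform

variable {u : ℝ → ℝ → ℝ → ℝ} {p ε x y t : ℝ}

lemma lsTransform_swapXY (v : ℝ → ℝ → ℝ → ℝ) :
    lsTransform p ε (swapXY v) = swapXY (lsTransform p ε v) := by
  funext x y t
  simp only [lsTransform, swapXY, add_comm x y]

lemma hasDerivAt_lsTransform_fst {v v' : ℝ → ℝ → ℝ → ℝ}
    (hv : HasDerivAt (fun z => v z (y / (1 + t * ε) ^ 2) (t / (1 + t * ε)))
      (v' (x / (1 + t * ε) ^ 2) (y / (1 + t * ε) ^ 2) (t / (1 + t * ε))) (x / (1 + t * ε) ^ 2)) :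
    HasDerivAt (fun z => lsTransform p ε v z y t)
      (lsTransform p ε
        (fun X Y T => 2 * ε / (1 + t * ε) * v X Y T + v' X Y T / (1 + t * ε) ^ 2) x y t) x := by
  have hexp : HasDerivAt (fun z => exp (2 * ε * (z + y) / (1 + t * ε)))
      (exp (2 * ε * (x + y) / (1 + t * ε)) * (2 * ε * 1 / (1 + t * ε))) x :=
    ((((hasDerivAt_id x).add_const y).const_mul (2 * ε)).div_const (1 + t * ε)).exp
  have hv' : HasDerivAt (fun z => v (z / (1 + t * ε) ^ 2) (y / (1 + t * ε) ^ 2) (t / (1 + t * ε)))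
      (v' (x / (1 + t * ε) ^ 2) (y / (1 + t * ε) ^ 2) (t / (1 + t * ε)) * (1 / (1 + t * ε) ^ 2)) x :=
    (hv.comp x ((hasDerivAt_id' x).div_const ((1 + t * ε) ^ 2)) :)
  exact ((hexp.const_mul ((1 + t * ε) ^ p)).mul hv').congr_deriv (by simp only [lsTransform]; ring)

variable (p ε)

lemma pdX_lsTransform (hu : ContDiffOn ℝ 1 ↿u Omega) (hx : 0 < x) (hy : 0 < y)
    (hs : 1 + t * ε ≠ 0) :
    pdX (lsTransform p ε u) x y t =
      lsTransform p ε
        (fun X Y T => 2 * ε / (1 + t * ε) * u X Y T + pdX u X Y T / (1 + t * ε) ^ 2) x y t := by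
  have hs2 : 0 < (1 + t * ε) ^ 2 := by positivity
  exact (hasDerivAt_lsTransform_fst (hasDerivAt_pdX
    (hu.differentiableAt_of_mem_Omega one_ne_zero (div_pos hx hs2) (div_pos hy hs2)))).deriv

lemma pdY_lsTransform (hu : ContDiffOn ℝ 1 ↿u Omega) (hx : 0 < x) (hy : 0 < y)
    (hs : 1 + t * ε ≠ 0) :
    pdY (lsTransform p ε u) x y t =
      lsTransform p ε
        (fun X Y T => 2 * ε / (1 + t * ε) * u X Y T + pdY u X Y T / (1 + t * ε) ^ 2) x y t := by
  have h := pdX_lsTransform p ε hu.swapXY hy hx hs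
  rw [lsTransform_swapXY] at h
  exact h.trans (congr_fun₃ (lsTransform_swapXY _) y x t)

lemma pdXX_lsTransform (hu : ContDiffOn ℝ 2 ↿u Omega) (hx : 0 < x) (hy : 0 < y)
    (hs : 1 + t * ε ≠ 0) :
    pdXX (lsTransform p ε u) x y t =
      lsTransform p ε
        (fun X Y T => 2 * ε / (1 + t * ε) *
            (2 * ε / (1 + t * ε) * u X Y T + pdX u X Y T / (1 + t * ε) ^ 2) +
          (2 * ε / (1 + t * ε) * pdX u X Y T + pdXX u X Y T / (1 + t * ε) ^ 2) / (1 + t * ε) ^ 2)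
        x y t := by
  have hs2 : 0 < (1 + t * ε) ^ 2 := by positivity
  have hpdX : ∀ᶠ z in nhds x, pdX (lsTransform p ε u) z y t =
      lsTransform p ε
        (fun X Y T => 2 * ε / (1 + t * ε) * u X Y T + pdX u X Y T / (1 + t * ε) ^ 2) z y t := by
    filter_upwards [lt_mem_nhds hx] with z hz
    exact pdX_lsTransform p ε (hu.of_le (by norm_num)) hz hy hs
  have hu' := hu.differentiableAt_of_mem_Omega two_ne_zero (div_pos hx hs2) (div_pos hy hs2)
    (t := t / (1 + t * ε))
  have hpdX' := (contDiffOn_pdX (n := 1) hu).differentiableAt_of_mem_Omega one_ne_zero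
    (div_pos hx hs2) (div_pos hy hs2) (t := t / (1 + t * ε))
  exact (hasDerivAt_lsTransform_fst
    (((hasDerivAt_pdX hu').const_mul _).add ((hasDerivAt_pdX hpdX').div_const _))
    |>.congr_of_eventuallyEq hpdX).deriv

lemma pdYY_lsTransform (hu : ContDiffOn ℝ 2 ↿u Omega) (hx : 0 < x) (hy : 0 < y)
    (hs : 1 + t * ε ≠ 0) :
    pdYY (lsTransform p ε u) x y t =
      lsTransform p ε
        (fun X Y T => 2 * ε / (1 + t * ε) *
            (2 * ε / (1 + t * ε) * u X Y T + pdY u X Y T / (1 + t * ε) ^ 2) +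
          (2 * ε / (1 + t * ε) * pdY u X Y T + pdYY u X Y T / (1 + t * ε) ^ 2) / (1 + t * ε) ^ 2)
        x y t := by
  have h := pdXX_lsTransform p ε hu.swapXY hy hx hs
  rw [lsTransform_swapXY] at h
  exact h.trans (congr_fun₃ (lsTransform_swapXY _) y x t)

lemma pdT_lsTransform (hu : ContDiffOn ℝ 1 ↿u Omega) (hx : 0 < x) (hy : 0 < y)
    (hs : 1 + t * ε ≠ 0) :
    pdT (lsTransform p ε u) x y t =
      lsTransform p ε
        (fun X Y T => (p * ε / (1 + t * ε) - 2 * ε ^ 2 * (X + Y)) * u X Y T -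
          2 * ε / (1 + t * ε) * (X * pdX u X Y T + Y * pdY u X Y T) +
          pdT u X Y T / (1 + t * ε) ^ 2) x y t := by
  have hs2 : 0 < (1 + t * ε) ^ 2 := by positivity
  have hu' := hu.differentiableAt_of_mem_Omega one_ne_zero (div_pos hx hs2) (div_pos hy hs2)
    (t := t / (1 + t * ε))
  have hs' : HasDerivAt (fun z => 1 + z * ε) ε t := by
    simpa using ((hasDerivAt_id t).mul_const ε).const_add 1
  have hpow : HasDerivAt (fun z => (1 + z * ε) ^ p) (ε * p * (1 + t * ε) ^ (p - 1)) t :=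
    hs'.rpow_const (Or.inl hs)
  have hexp := ((hasDerivAt_const t (2 * ε * (x + y))).fun_div hs' hs).exp
  have hX := (hasDerivAt_const t x).fun_div (hs'.fun_pow 2) (pow_ne_zero 2 hs)
  have hY := (hasDerivAt_const t y).fun_div (hs'.fun_pow 2) (pow_ne_zero 2 hs)
  have hT := (hasDerivAt_id' t).fun_div hs' hs
  refine ((hpow.fun_mul hexp).fun_mul
    (hasDerivAt_comp_curve_of_partials hu' hX hY hT)).deriv.trans ?_
  simp only [lsTransform, rpow_sub_one hs]
  norm_num only [one_mul, add_sub_cancel_right]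
  -- with `1 + t * ε` an atom, `field_simp` clears it as a denominator instead of expanding it
  generalize 1 + t * ε = s at hs ⊢
  field_simp
  ring

end Transform

/-- Symmetry of the Longstaff–Schwartz equation when `b = e = 0` (subcase 2.4, group `G₁`). -/
theorem ls_symmetry_b_e_zero_G1 (a b d e : ℝ) (hb : b = 0) (he : e = 0)
    (u : ℝ → ℝ → ℝ → ℝ) (hu : IsLSSolution a b d e u) (ε : ℝ) :
    ∀ x y t : ℝ, 0 < x → 0 < y → 1 + t * ε > 0 →
      LSEq a b d e
        (fun x y t =>
          (1 + t * ε) ^ (-(2 * (a + d))) *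
            Real.exp (2 * ε * (x + y) / (1 + t * ε)) *
            u (x / (1 + t * ε) ^ 2) (y / (1 + t * ε) ^ 2) (t / (1 + t * ε)))
        x y t := by
  obtain ⟨hC2, hpde⟩ := hu
  subst hb he
  intro x y t hx hy hs
  have hC1 : ContDiffOn ℝ 1 ↿u Omega := hC2.of_le one_le_two
  have hs2 : 0 < (1 + t * ε) ^ 2 := by positivity
  have hR := hpde _ _ (t / (1 + t * ε)) (div_pos hx hs2) (div_pos hy hs2)
  change LSEq a 0 d 0 (lsTransform (-(2 * (a + d))) ε u) x y t
  unfold LSEq at hR ⊢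
  rw [pdT_lsTransform _ _ hC1 hx hy hs.ne', pdX_lsTransform _ _ hC1 hx hy hs.ne',
    pdY_lsTransform _ _ hC1 hx hy hs.ne', pdXX_lsTransform _ _ hC2 hx hy hs.ne',
    pdYY_lsTransform _ _ hC2 hx hy hs.ne']
  simp only [lsTransform]
  rw [hR]
  field_simp
  ring
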